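/- arXiv:2406.14332 — 2 statements merged into one kernel-verified Lean document; each statement's English description precedes it below -/
import Mathlib

section
/- Let H be a digraph with maximum matching M of its underlying graph, |M| = m > 0, X the set of M-uncovered vertices, |X| ≥ 3, and δ⁰(H) ≥ m. Then for every edge e = [u,v] ∈ M there is exactly one endpoint v(e) ∈ {u,v} such that (v(e),x) and (x,v(e)) are arcs of H for every x ∈ X, while the other endpoint u(e) has no neighbours in X. -/
/-- The underlying graph of a digraph given by its arc relation. -/
def UGraph {V : Type*} (A : V → V → Prop) : SimpleGraph V where
  Adj a b := a ≠ b ∧ (A a b ∨ A b a)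
  symm := ⟨fun a b h => ⟨h.1.symm, h.2.symm⟩⟩
  loopless := ⟨fun a h => h.1 rfl⟩

/-!
For an uncovered vertex `x`, maximality of `M` gives `N(x) ⊆ V(M)`, and for distinct uncovered
`y, z` the augmenting path `y – w = w' – z` shows that `z` is adjacent to no mate `w'` of a
neighbour `w` of `y`. As `|V(M)| = 2m` and both neighbourhoods have at least `m` vertices, `N(z)`
is exactly the complement in `V(M)` of the mates of `N(y)`. A third uncovered vertex then makes all
the neighbourhoods `N(x)`, `x ∈ X`, one and the same set `S` of size `m`, containing exactly one
endpoint of each matching edge; the semi-degree bound forces the out- and in-neighbourhood of every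
`x ∈ X` to be all of `S`.
-/

namespace SimpleGraph.Subgraph

variable {V : Type*} {G : SimpleGraph V} {M : G.Subgraph}

theorem IsMatching.ncard_verts_eq_two_mul [Finite V] (h : M.IsMatching) :
    M.verts.ncard = 2 * M.edgeSet.ncard := by
  have := Fintype.ofFinite M.edgeSet
  have fiber (e : M.edgeSet) : Nat.card {v // h.toEdge v = e} = 2 := by
    obtain ⟨e, he⟩ := e
    induction e using Sym2.ind with
    | h u v =>
      change Nat.card (h.toEdge ⁻¹' {⟨s(u, v), he⟩}) = 2
      rw [h.toEdge_preimage_singleton he, Nat.card_coe_set_eq, Set.ncard_pair]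
      simpa using (M.adj_sub he).ne
  rw [← Nat.card_coe_set_eq, ← Nat.card_coe_set_eq,
    ← Nat.card_congr (Equiv.sigmaFiberEquiv h.toEdge), Nat.card_sigma]
  simp only [fiber, Finset.sum_const, Finset.card_univ, smul_eq_mul, Nat.card_eq_fintype_card,
    mul_comm]

theorem IsMatching.deleteVerts (h : M.IsMatching) {s : Set V}
    (hs : ∀ ⦃a b⦄, M.Adj a b → a ∈ s → b ∈ s) : (M.deleteVerts s).IsMatching := by
  rintro v ⟨hv, hvs⟩
  obtain ⟨w, hvw, huniq⟩ := h hv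
  refine ⟨w, ?_, fun w' hw' => huniq w' (deleteVerts_adj.mp hw').2.2.2.2⟩
  exact deleteVerts_adj.mpr ⟨hv, hvs, hvw.snd_mem, fun hw => hvs (hs hvw.symm hw), hvw⟩

theorem IsMatching.sup_subgraphOfAdj (h : M.IsMatching) {x y : V} (hxy : G.Adj x y)
    (hx : x ∉ M.verts) (hy : y ∉ M.verts) : (M ⊔ G.subgraphOfAdj hxy).IsMatching := by
  refine h.sup (.subgraphOfAdj hxy) ?_
  rw [h.support_eq_verts, support_subgraphOfAdj]
  exact Set.disjoint_left.mpr fun a ha hmem => by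
    rcases hmem with rfl | rfl <;> contradiction

theorem IsMatching.exists_isMatching_verts_eq_insert_insert (h : M.IsMatching) {u v x y : V}
    (huv : M.Adj u v) (hx : x ∉ M.verts) (hy : y ∉ M.verts) (hxy : x ≠ y)
    (hxu : G.Adj x u) (hyv : G.Adj y v) :
    ∃ M' : G.Subgraph, M'.IsMatching ∧ M'.verts = insert x (insert y M.verts) := by
  have hu := huv.fst_mem
  have hv := huv.snd_mem
  have hD : (M.deleteVerts {u, v}).IsMatching := h.deleteVerts fun a b hab ha => by
    rcases ha with rfl | rfl
    · exact .inr (h.eq_of_adj_left hab huv)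
    · exact .inl (h.eq_of_adj_left hab huv.symm)
  have hD' := hD.sup_subgraphOfAdj hxu (by simp [hx]) (by simp)
  refine ⟨_, hD'.sup_subgraphOfAdj hyv ?_ ?_, ?_⟩
  · simp [hy, hxy.symm, (hu.ne_of_notMem hy).symm]
  · simp [(M.adj_sub huv).ne.symm, hv.ne_of_notMem hx]
  · ext w
    simp only [verts_sup, deleteVerts_verts, subgraphOfAdj_verts, Set.mem_union, Set.mem_sdiff,
      Set.mem_insert_iff, Set.mem_singleton_iff]
    grind

theorem IsMatching.mem_image_iff_of_adj {p : V → V} (h : M.IsMatching)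
    (hp : ∀ v ∈ M.verts, M.Adj v (p v)) {T : Set V} (hT : T ⊆ M.verts) {u v : V}
    (huv : M.Adj u v) : u ∈ p '' T ↔ v ∈ T := by
  constructor
  · rintro ⟨w, hw, rfl⟩
    rwa [← h.eq_of_adj_right (hp w (hT hw)) huv.symm]
  · exact fun hv => ⟨v, hv, h.eq_of_adj_left (hp v huv.snd_mem) huv.symm⟩

theorem IsMatching.injOn_verts {p : V → V} (h : M.IsMatching)
    (hp : ∀ v ∈ M.verts, M.Adj v (p v)) : Set.InjOn p M.verts := fun a ha b hb hab =>
  h.eq_of_adj_right (hp a ha) (hab ▸ hp b hb)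

def IsMaximumMatching (M : G.Subgraph) : Prop :=
  M.IsMatching ∧ ∀ M' : G.Subgraph, M'.IsMatching → M'.edgeSet.ncard ≤ M.edgeSet.ncard

namespace IsMaximumMatching

variable [Finite V] (hM : M.IsMaximumMatching)
include hM

theorem verts_ne_insert_insert {x y : V} (hx : x ∉ M.verts) (hy : y ∉ M.verts) (hxy : x ≠ y)
    {M' : G.Subgraph} (hM' : M'.IsMatching) : M'.verts ≠ insert x (insert y M.verts) := by
  intro hverts
  have hcard := hM'.ncard_verts_eq_two_mul
  rw [hverts, Set.ncard_insert_of_notMem (by simp [hxy, hx]),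
    Set.ncard_insert_of_notMem hy, hM.1.ncard_verts_eq_two_mul] at hcard
  have := hM.2 M' hM'
  omega

theorem not_adj_of_notMem_verts {x y : V} (hx : x ∉ M.verts) (hy : y ∉ M.verts) :
    ¬ G.Adj x y := fun hxy =>
  hM.verts_ne_insert_insert hx hy hxy.ne (hM.1.sup_subgraphOfAdj hxy hx hy) (by
    rw [verts_sup, subgraphOfAdj_verts, Set.union_insert, Set.union_singleton])

theorem not_adj_of_adj_of_adj {u v x y : V} (hx : x ∉ M.verts) (hy : y ∉ M.verts) (hxy : x ≠ y)
    (huv : M.Adj u v) (hxu : G.Adj x u) : ¬ G.Adj y v := fun hyv =>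
  let ⟨_, hM', hverts⟩ := hM.1.exists_isMatching_verts_eq_insert_insert huv hx hy hxy hxu hyv
  hM.verts_ne_insert_insert hx hy hxy hM' hverts

theorem neighborSet_subset_verts {x : V} (hx : x ∉ M.verts) : G.neighborSet x ⊆ M.verts :=
  fun _ hw => by_contra fun hw' => hM.not_adj_of_notMem_verts hx hw' hw

theorem neighborSet_eq_sdiff_image {p : V → V} (hp : ∀ v ∈ M.verts, M.Adj v (p v)) {y z : V}
    (hy : y ∉ M.verts) (hz : z ∉ M.verts) (hyz : y ≠ z)
    (hdy : M.edgeSet.ncard ≤ (G.neighborSet y).ncard)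
    (hdz : M.edgeSet.ncard ≤ (G.neighborSet z).ncard) :
    G.neighborSet z = M.verts \ p '' G.neighborSet y ∧
      (G.neighborSet y).ncard = M.edgeSet.ncard := by
  have hNy := hM.neighborSet_subset_verts hy
  have hdisj : Disjoint (G.neighborSet z) (p '' G.neighborSet y) :=
    Set.disjoint_right.mpr fun _ ⟨w, hw, hpw⟩ hzw =>
      hM.not_adj_of_adj_of_adj hy hz hyz (hp w (hNy hw)) hw (hpw ▸ hzw)
  have hsub : G.neighborSet z ∪ p '' G.neighborSet y ⊆ M.verts :=
    Set.union_subset (hM.neighborSet_subset_verts hz) (Set.image_subset_iff.mpr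
      fun w hw => (hp w (hNy hw)).snd_mem)
  have hcard : (G.neighborSet z ∪ p '' G.neighborSet y).ncard =
      (G.neighborSet z).ncard + (G.neighborSet y).ncard := by
    rw [Set.ncard_union_eq hdisj, ((hM.1.injOn_verts hp).mono hNy).ncard_image]
  have hverts := hM.1.ncard_verts_eq_two_mul
  have hunion : G.neighborSet z ∪ p '' G.neighborSet y = M.verts :=
    Set.eq_of_subset_of_ncard_le hsub (by omega)
  refine ⟨?_, by have := Set.ncard_le_ncard hsub; omega⟩
  rw [← hunion, Set.union_sdiff_right, hdisj.sdiff_eq_left]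

theorem exists_neighborSet_eq (hX : 3 ≤ M.vertsᶜ.ncard)
    (hdeg : ∀ x ∉ M.verts, M.edgeSet.ncard ≤ (G.neighborSet x).ncard) :
    ∃ S : Set V, S.ncard = M.edgeSet.ncard ∧ (∀ x ∉ M.verts, G.neighborSet x = S) ∧
      ∀ ⦃u v : V⦄, M.Adj u v → (u ∈ S ↔ v ∉ S) := by
  choose! p hp using fun v (hv : v ∈ M.verts) => (hM.1 hv).exists
  have key {y z : V} (hy : y ∉ M.verts) (hz : z ∉ M.verts) (hyz : y ≠ z) :=
    hM.neighborSet_eq_sdiff_image hp hy hz hyz (hdeg y hy) (hdeg z hz)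
  have hconst {y z : V} (hy : y ∉ M.verts) (hz : z ∉ M.verts) :
      G.neighborSet y = G.neighborSet z := by
    rcases eq_or_ne y z with rfl | hyz
    · rfl
    obtain ⟨x, ⟨hx, hxz⟩, hxy⟩ := Set.exists_ne_of_one_lt_ncard
      (s := M.vertsᶜ \ {z}) (by rw [Set.ncard_sdiff_singleton_of_mem hz]; omega) y
    rw [(key hx hy hxy).1, (key hx hz (by simpa using hxz)).1]
  obtain ⟨x, y, hx, hy, hxy⟩ := (Set.one_lt_ncard_iff).mp (by omega : 1 < M.vertsᶜ.ncard)
  have hS : G.neighborSet x = M.verts \ p '' G.neighborSet x := by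
    rw [← (key hx hy hxy).1, hconst hy hx]
  refine ⟨G.neighborSet x, (key hx hy hxy).2, fun z hz => hconst hz hx, fun u v huv => ?_⟩
  rw [Set.ext_iff.mp hS u, Set.mem_sdiff,
    hM.1.mem_image_iff_of_adj hp (hM.neighborSet_subset_verts hx) huv]
  exact and_iff_right huv.fst_mem

end IsMaximumMatching

end SimpleGraph.Subgraph

namespace UGraph

variable {V : Type*} {A : V → V → Prop}

theorem setOf_subset_neighborSet (hirr : ∀ v, ¬ A v v) (v : V) :
    {w | A v w} ⊆ (UGraph A).neighborSet v ∧ {w | A w v} ⊆ (UGraph A).neighborSet v :=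
  ⟨fun _ h => ⟨by rintro rfl; exact hirr v h, .inl h⟩,
    fun _ h => ⟨by rintro rfl; exact hirr v h, .inr h⟩⟩

theorem setOf_eq_of_neighborSet_eq [Finite V] (hirr : ∀ v, ¬ A v v) {v : V} {S : Set V}
    (hN : (UGraph A).neighborSet v = S) (hout : S.ncard ≤ {w | A v w}.ncard)
    (hin : S.ncard ≤ {w | A w v}.ncard) : {w | A v w} = S ∧ {w | A w v} = S := by
  obtain ⟨hsub_out, hsub_in⟩ := setOf_subset_neighborSet hirr v
  rw [hN] at hsub_out hsub_in
  exact ⟨Set.eq_of_subset_of_ncard_le hsub_out hout, Set.eq_of_subset_of_ncard_le hsub_in hin⟩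

end UGraph

theorem stmt_5_general {V : Type*} [Fintype V] (A : V → V → Prop) (hirr : ∀ v, ¬ A v v)
    (M : (UGraph A).Subgraph) (hM : M.IsMatching)
    (hmax : ∀ M' : (UGraph A).Subgraph, M'.IsMatching →
      M'.edgeSet.ncard ≤ M.edgeSet.ncard)
    (m : ℕ) (hm : M.edgeSet.ncard = m)
    (hX : 3 ≤ (M.vertsᶜ).ncard)
    (hdel : ∀ v : V, m ≤ {w | A v w}.ncard ∧ m ≤ {w | A w v}.ncard) :
    ∀ u v : V, M.Adj u v →
      ∃ a b : V, ({a, b} : Set V) = {u, v} ∧ a ≠ b ∧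
        (∀ x ∈ M.vertsᶜ, A a x ∧ A x a) ∧
        (∀ x ∈ M.vertsᶜ, ¬ A b x ∧ ¬ A x b) := by
  intro u v huv
  have hMmax : M.IsMaximumMatching := ⟨hM, hmax⟩
  obtain ⟨S, hSm, hN, hS⟩ := hMmax.exists_neighborSet_eq hX fun x _ =>
    hm ▸ (hdel x).1.trans (Set.ncard_le_ncard (UGraph.setOf_subset_neighborSet hirr x).1)
  have harcs {x : V} (hx : x ∈ M.vertsᶜ) (w : V) : (A w x ↔ w ∈ S) ∧ (A x w ↔ w ∈ S) :=
    have h := UGraph.setOf_eq_of_neighborSet_eq hirr (hN x hx) (hSm ▸ hm ▸ (hdel x).1)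
      (hSm ▸ hm ▸ (hdel x).2)
    ⟨Set.ext_iff.mp h.2 w, Set.ext_iff.mp h.1 w⟩
  have hmem {a : V} (ha : a ∈ S) (x : V) (hx : x ∈ M.vertsᶜ) : A a x ∧ A x a :=
    ⟨(harcs hx a).1.mpr ha, (harcs hx a).2.mpr ha⟩
  have hnotMem {b : V} (hb : b ∉ S) (x : V) (hx : x ∈ M.vertsᶜ) : ¬ A b x ∧ ¬ A x b :=
    ⟨mt (harcs hx b).1.mp hb, mt (harcs hx b).2.mp hb⟩
  by_cases hu : u ∈ S
  · exact ⟨u, v, rfl, (M.adj_sub huv).ne, hmem hu, hnotMem ((hS huv).mp hu)⟩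
  · exact ⟨v, u, Set.pair_comm v u, (M.adj_sub huv).ne.symm,
      hmem (not_not.mp (mt (hS huv).mpr hu)), hnotMem hu⟩

/-- structure of matching edges when `|X| ≥ 3` and `δ⁰(H) ≥ m`:
each matching edge has exactly one endpoint doubly adjacent to all of `X`,
while the other endpoint has no neighbours in `X`. -/
theorem stmt_5 {V : Type*} [Fintype V] (A : V → V → Prop) (hirr : ∀ v, ¬ A v v)
    (M : (UGraph A).Subgraph) (hM : M.IsMatching)
    (hmax : ∀ M' : (UGraph A).Subgraph, M'.IsMatching →
      M'.edgeSet.ncard ≤ M.edgeSet.ncard)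
    (m : ℕ) (hm : M.edgeSet.ncard = m) (hpos : 0 < m)
    (hX : 3 ≤ (M.vertsᶜ).ncard)
    (hdel : ∀ v : V, m ≤ {w | A v w}.ncard ∧ m ≤ {w | A w v}.ncard) :
    ∀ u v : V, M.Adj u v →
      ∃ a b : V, ({a, b} : Set V) = {u, v} ∧ a ≠ b ∧
        (∀ x ∈ M.vertsᶜ, A a x ∧ A x a) ∧
        (∀ x ∈ M.vertsᶜ, ¬ A b x ∧ ¬ A x b) :=
  stmt_5_general A hirr M hM hmax m hm hX hdel
end

section
/- Let D be a digraph on n vertices, S ⊆ V(D), Q a closed directed trail with V(Q) ∩ S ≠ ∅, and s ∈ S − V(Q) with no arcs between s and V(Q). Suppose D is S-strong and Q is chosen with |V(Q) ∩ S| maximum. If every pair of nonadjacent vertices u, v ∈ S satisfies d(u) + d(v) ≥ 2n − 3, then there exist vertices x, y ∈ V(Q) and an (x,y)-directed path P in D through s, internally disjoint from Q except possibly one internal vertex used twice as a trail vertex, i.e., D contains an (x,y)-ditrail T through s with V(T) ∩ V(Q) = {x,y} in which at most one internal vertex t has d⁺_T(t) = d⁻_T(t) = 2 and all other internal vertices w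 have d⁺_T(w) = d⁻_T(w) = 1. -/
/-- A directed walk: consecutive vertices are joined by arcs. -/
def IsDiwalk {V : Type*} (A : V → V → Prop) : List V → Prop
  | [] => True
  | [_] => True
  | a :: b :: l => A a b ∧ IsDiwalk A (b :: l)

/-- The list of arcs traversed by a walk given as a vertex list. -/
def arcList {V : Type*} (l : List V) : List (V × V) := l.zip l.tail

/-- A directed trail: a directed walk with no repeated arcs. -/
def IsDitrail {V : Type*} (A : V → V → Prop) (l : List V) : Prop :=
  IsDiwalk A l ∧ (arcList l).Nodup

/-- A closed directed trail: a directed trail whose first and last vertices coincide. -/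
def IsClosedDitrail {V : Type*} (A : V → V → Prop) (l : List V) : Prop :=
  IsDitrail A l ∧ l.head? = l.getLast?

/-- A directed path from `u` to `v` (no repeated vertices). -/
def IsDipathFrom {V : Type*} (A : V → V → Prop) (u v : V) (l : List V) : Prop :=
  IsDiwalk A l ∧ l.Nodup ∧ l.head? = some u ∧ l.getLast? = some v

/-- Reachability by a directed path. -/
def DiReach {V : Type*} (A : V → V → Prop) (u v : V) : Prop :=
  ∃ l, IsDipathFrom A u v l

/-! Let `q ∈ S ∩ V(Q)`; by `S`-strongness there are paths `q → s` and `s → q`. If some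
out-neighbour `β` of `s` has an arc into `Q`, follow a path from its last vertex `x` on `Q`
to `s`, then `s → β → q'`; symmetrically for an in-neighbour `α` of `s` with an arc from `Q`.
Both trails are a concatenation of two paths with no common arc, so every internal vertex is
visited once, except `β` (resp. `α`), which may be visited twice. If neither case occurs,
the neighbourhoods `N⁺(q), N⁻(s)` and `N⁻(q), N⁺(s)` are disjoint pairs inside
`V ∖ {s, q}`, so `d(s) + d(q) ≤ 2n - 4`, contradicting the degree condition since `s` and `q`
are nonadjacent. -/

section Walks

variable {V : Type*} {A : V → V → Prop}

theorem isDiwalk_iff_isChain : ∀ {l : List V}, IsDiwalk A l ↔ l.IsChain A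
  | [] => by simp [IsDiwalk]
  | [_] => by simp [IsDiwalk]
  | a :: b :: l => by rw [IsDiwalk, List.isChain_cons_cons, isDiwalk_iff_isChain]

theorem isDipathFrom_reverse {u v : V} {l : List V} :
    IsDipathFrom (fun a b => A b a) v u l.reverse ↔ IsDipathFrom A u v l := by
  simp only [IsDipathFrom, isDiwalk_iff_isChain, List.isChain_reverse, List.nodup_reverse,
    List.head?_reverse, List.getLast?_reverse]
  tauto

theorem arcList_cons_cons (a b : V) (l : List V) :
    arcList (a :: b :: l) = (a, b) :: arcList (b :: l) := rfl

theorem map_fst_arcList : ∀ l : List V, (arcList l).map Prod.fst = l.dropLast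
  | [] => rfl
  | [_] => rfl
  | a :: b :: l => by
    rw [arcList_cons_cons, List.map_cons, map_fst_arcList (b :: l)]
    rfl

theorem map_snd_arcList : ∀ l : List V, (arcList l).map Prod.snd = l.tail
  | [] => rfl
  | [_] => rfl
  | a :: b :: l => by
    rw [arcList_cons_cons, List.map_cons, map_snd_arcList (b :: l)]
    rfl

theorem mem_dropLast_of_mem_arcList {l : List V} {p : V × V} (h : p ∈ arcList l) :
    p.1 ∈ l.dropLast :=
  map_fst_arcList l ▸ List.mem_map_of_mem h

theorem mem_tail_of_mem_arcList {l : List V} {p : V × V} (h : p ∈ arcList l) :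
    p.2 ∈ l.tail :=
  map_snd_arcList l ▸ List.mem_map_of_mem h

theorem nodup_arcList {l : List V} (hl : l.Nodup) : (arcList l).Nodup :=
  List.Nodup.of_map Prod.fst (map_fst_arcList l ▸ hl.sublist (List.dropLast_sublist l))

theorem arcList_append_cons : ∀ (l : List V) {a : V}, l.getLast? = some a → ∀ b m,
    arcList (l ++ b :: m) = arcList l ++ (a, b) :: arcList (b :: m)
  | [], _, h, _, _ => by simp at h
  | [_], _, h, _, _ => by
    obtain rfl := Option.some.inj h
    rfl
  | u :: w :: l, a, h, b, m => by
    rw [List.getLast?_cons_cons] at h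
    change (u, w) :: arcList (w :: l ++ b :: m) = (u, w) :: (arcList (w :: l) ++ _)
    rw [arcList_append_cons (w :: l) h]

theorem getLast_not_mem_dropLast {l : List V} {a : V} (hl : l.Nodup) (ha : l.getLast? = some a) :
    a ∉ l.dropLast := by
  rw [← List.dropLast_append_getLast? a ha, List.nodup_append] at hl
  exact fun h => hl.2.2 a h a List.mem_cons_self rfl

theorem isDitrail_append {L₁ L₂ : List V} {a b : V} (h₁ : IsDiwalk A L₁) (h₂ : IsDiwalk A L₂)
    (hnd₁ : L₁.Nodup) (hnd₂ : L₂.Nodup) (ha : L₁.getLast? = some a) (hb : L₂.head? = some b)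
    (hab : A a b) (hdisj : (arcList L₁).Disjoint (arcList L₂)) : IsDitrail A (L₁ ++ L₂) := by
  obtain ⟨m, rfl⟩ : ∃ m, L₂ = b :: m := by
    cases L₂ with
    | nil => simp at hb
    | cons c m => exact ⟨m, by simpa using hb⟩
  refine ⟨?_, ?_⟩
  · rw [isDiwalk_iff_isChain, List.isChain_append]
    refine ⟨isDiwalk_iff_isChain.mp h₁, isDiwalk_iff_isChain.mp h₂, ?_⟩
    simp_all
  · rw [arcList_append_cons L₁ ha, List.nodup_append, List.nodup_cons]
    refine ⟨nodup_arcList hnd₁, ⟨fun h => ?_, nodup_arcList hnd₂⟩, ?_⟩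
    · exact (List.nodup_cons.mp hnd₂).1 (mem_tail_of_mem_arcList h)
    · intro p hp p' hp' hpp'
      subst hpp'
      rcases List.mem_cons.mp hp' with rfl | hp'
      · exact getLast_not_mem_dropLast hnd₁ ha (mem_dropLast_of_mem_arcList hp)
      · exact hdisj hp hp'

theorem exists_isDipathFrom_of_last_mem (Q : List V) {v : V} :
    ∀ {l : List V}, IsDiwalk A l → l.Nodup → l.getLast? = some v → (∃ w ∈ l, w ∈ Q) →
      ∃ x ∈ Q, ∃ P, IsDipathFrom A x v (x :: P) ∧ ∀ w ∈ P, w ∉ Q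
  | [], _, _, _, ⟨_, h, _⟩ => absurd h List.not_mem_nil
  | a :: t, hw, hnd, hv, hQ => by
    by_cases ht : ∃ w ∈ t, w ∈ Q
    · obtain ⟨b, t', rfl⟩ : ∃ b t', t = b :: t' := by
        obtain ⟨w, hw, -⟩ := ht
        exact List.exists_cons_of_ne_nil (List.ne_nil_of_mem hw)
      rw [List.getLast?_cons_cons] at hv
      exact exists_isDipathFrom_of_last_mem Q hw.2 hnd.of_cons hv ht
    · have haQ : a ∈ Q := by
        obtain ⟨w, hw, hwQ⟩ := hQ
        rcases List.mem_cons.mp hw with rfl | hw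
        exacts [hwQ, absurd ⟨w, hw, hwQ⟩ ht]
      exact ⟨a, haQ, t, ⟨hw, hnd, rfl, hv⟩, fun w hw hwQ => ht ⟨w, hw, hwQ⟩⟩

theorem IsDipathFrom.exists_suffix {Q : List V} {u v : V} {l : List V}
    (hl : IsDipathFrom A u v l) (hu : u ∈ Q) :
    ∃ x ∈ Q, ∃ P, IsDipathFrom A x v (x :: P) ∧ ∀ w ∈ P, w ∉ Q :=
  exists_isDipathFrom_of_last_mem Q hl.1 hl.2.1 hl.2.2.2 ⟨u, List.mem_of_mem_head? hl.2.2.1, hu⟩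

theorem IsDipathFrom.exists_prefix {Q : List V} {u v : V} {l : List V}
    (hl : IsDipathFrom A u v l) (hv : v ∈ Q) :
    ∃ y ∈ Q, ∃ P, IsDipathFrom A u y (P ++ [y]) ∧ ∀ w ∈ P, w ∉ Q := by
  obtain ⟨y, hy, P, hP, hPQ⟩ := (isDipathFrom_reverse.mpr hl).exists_suffix hv
  refine ⟨y, hy, P.reverse, ?_, fun w hw => hPQ w (List.mem_reverse.mp hw)⟩
  rw [← isDipathFrom_reverse]
  simpa using hP

end Walks

section Degrees

variable {V : Type*} [DecidableEq V]

def outDeg (T : List V) (v : V) : ℕ := ((arcList T).filter fun p => p.1 = v).length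

def inDeg (T : List V) (v : V) : ℕ := ((arcList T).filter fun p => p.2 = v).length

theorem outDeg_eq_count_dropLast (T : List V) (v : V) : outDeg T v = T.dropLast.count v := by
  rw [outDeg, ← List.countP_eq_length_filter, ← map_fst_arcList, List.count, List.countP_map]
  rfl

theorem inDeg_eq_count_tail (T : List V) (v : V) : inDeg T v = T.tail.count v := by
  rw [inDeg, ← List.countP_eq_length_filter, ← map_snd_arcList, List.count, List.countP_map]
  rfl

theorem outDeg_eq_count {T : List V} {v y : V} (hy : T.getLast? = some y) (hv : v ≠ y) :
    outDeg T v = T.count v := by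
  conv_rhs => rw [← List.dropLast_append_getLast? y hy]
  simp [outDeg_eq_count_dropLast, List.count_append, hv.symm]

theorem inDeg_eq_count {T : List V} {v x : V} (hx : T.head? = some x) (hv : v ≠ x) :
    inDeg T v = T.count v := by
  cases T with
  | nil => simp at hx
  | cons a T =>
    obtain rfl := Option.some.inj hx
    simp [inDeg_eq_count_tail, hv.symm]

end Degrees

section AttachingTrail

variable {V : Type*} [DecidableEq V] {A : V → V → Prop}

def IsAttachingTrail (A : V → V → Prop) (Q : List V) (x y : V) (T : List V) : Prop :=
  x ∈ Q ∧ y ∈ Q ∧ IsDitrail A T ∧ T.head? = some x ∧ T.getLast? = some y ∧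
    {v | v ∈ T ∧ v ∈ Q} = {x, y} ∧
    (∀ v ∈ T, v ≠ x → v ≠ y →
      (outDeg T v = 1 ∧ inDeg T v = 1) ∨ (outDeg T v = 2 ∧ inDeg T v = 2)) ∧
    (∀ v ∈ T, ∀ w ∈ T, v ≠ x → v ≠ y → w ≠ x → w ≠ y →
      outDeg T v = 2 → outDeg T w = 2 → v = w)

theorem isAttachingTrail_append {Q L₁ L₂ : List V} {x y a b c : V} (hx : x ∈ Q) (hy : y ∈ Q)
    (h₁ : IsDiwalk A L₁) (h₂ : IsDiwalk A L₂) (hnd₁ : L₁.Nodup) (hnd₂ : L₂.Nodup)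
    (hx₁ : L₁.head? = some x) (ha : L₁.getLast? = some a) (hb : L₂.head? = some b)
    (hy₂ : L₂.getLast? = some y) (hab : A a b) (hdisj : (arcList L₁).Disjoint (arcList L₂))
    (hQ : ∀ v ∈ L₁ ++ L₂, v ∈ Q → v = x ∨ v = y)
    (hcommon : ∀ v ∈ L₁, v ∈ L₂ → v = x ∨ v = y ∨ v = c) :
    IsAttachingTrail A Q x y (L₁ ++ L₂) := by
  have hhead : (L₁ ++ L₂).head? = some x := by simp [List.head?_append, hx₁]
  have hlast : (L₁ ++ L₂).getLast? = some y := by simp [List.getLast?_append, hy₂]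
  have hcount : ∀ v, (L₁ ++ L₂).count v = (if v ∈ L₁ then 1 else 0) + if v ∈ L₂ then 1 else 0 :=
    fun v => by rw [List.count_append, hnd₁.count, hnd₂.count]
  have hdeg : ∀ v, v ≠ x → v ≠ y →
      outDeg (L₁ ++ L₂) v = (L₁ ++ L₂).count v ∧ inDeg (L₁ ++ L₂) v = (L₁ ++ L₂).count v :=
    fun v hvx hvy => ⟨outDeg_eq_count hlast hvy, inDeg_eq_count hhead hvx⟩
  have htwice : ∀ v, v ≠ x → v ≠ y → outDeg (L₁ ++ L₂) v = 2 → v = c := by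
    intro v hvx hvy h2
    rw [(hdeg v hvx hvy).1, hcount] at h2
    obtain ⟨hv₁, hv₂⟩ : v ∈ L₁ ∧ v ∈ L₂ := by
      split_ifs at h2 with hv₁ hv₂ <;> first | exact ⟨hv₁, hv₂⟩ | omega
    simpa [hvx, hvy] using hcommon v hv₁ hv₂
  refine ⟨hx, hy, isDitrail_append h₁ h₂ hnd₁ hnd₂ ha hb hab hdisj, hhead, hlast, ?_, ?_, ?_⟩
  · ext v
    refine ⟨fun hv => hQ v hv.1 hv.2, ?_⟩
    rintro (rfl | rfl)
    exacts [⟨List.mem_of_mem_head? hhead, hx⟩, ⟨List.mem_of_mem_getLast? hlast, hy⟩]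
  · intro v hv hvx hvy
    rw [(hdeg v hvx hvy).1, (hdeg v hvx hvy).2, hcount]
    rw [List.mem_append] at hv
    split_ifs <;> simp_all
  · intro v _ w _ hvx hvy hwx hwy hv hw
    rw [htwice v hvx hvy hv, htwice w hwx hwy hw]

/-- Case `s → β → Q`: a path from its last vertex on `Q` to `s`, followed by `β` and `q'`. -/
theorem exists_isAttachingTrail_of_arc_out {Q : List V} {q s β q' : V} (hq : q ∈ Q)
    (hreach : DiReach A q s) (hsβ : A s β) (hβq' : A β q') (hβ : β ∉ Q) (hq' : q' ∈ Q) :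
    ∃ x y T, IsAttachingTrail A Q x y T ∧ s ∈ T := by
  obtain ⟨l, hl⟩ := hreach
  obtain ⟨x, hx, P, ⟨hw, hnd, hhead, hlast⟩, hPQ⟩ := hl.exists_suffix hq
  have hβq'_ne : β ≠ q' := fun h => hβ (h ▸ hq')
  refine ⟨x, q', _, isAttachingTrail_append (L₂ := [β, q']) (c := β) hx hq' hw ⟨hβq', trivial⟩
    hnd (by simpa using hβq'_ne) hhead hlast rfl rfl hsβ ?_ ?_ ?_,
    List.mem_append_left _ (List.mem_of_mem_getLast? hlast)⟩
  · rintro p hp (_ | ⟨_, ⟨⟩⟩)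
    exact hPQ q' (mem_tail_of_mem_arcList hp) hq'
  · intro v hv hvQ
    simp only [List.mem_append, List.mem_cons, List.not_mem_nil, or_false] at hv
    rcases hv with (rfl | hv) | rfl | rfl
    exacts [Or.inl rfl, absurd hvQ (hPQ v hv), absurd hvQ hβ, Or.inr rfl]
  · intro v _ hv
    simp only [List.mem_cons, List.not_mem_nil, or_false] at hv
    tauto

/-- Case `Q → α → s`: `q'` and `α`, followed by a path from `s` to its first vertex on `Q`. -/
theorem exists_isAttachingTrail_of_arc_in {Q : List V} {q s α q' : V} (hq : q ∈ Q)
    (hreach : DiReach A s q) (hαs : A α s) (hq'α : A q' α) (hα : α ∉ Q) (hq' : q' ∈ Q) :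
    ∃ x y T, IsAttachingTrail A Q x y T ∧ s ∈ T := by
  obtain ⟨l, hl⟩ := hreach
  obtain ⟨y, hy, P, ⟨hw, hnd, hhead, hlast⟩, hPQ⟩ := hl.exists_prefix hq
  have hq'α_ne : q' ≠ α := fun h => hα (h ▸ hq')
  refine ⟨q', y, _, isAttachingTrail_append (L₁ := [q', α]) (c := α) hq' hy ⟨hq'α, trivial⟩ hw
    (by simpa using hq'α_ne) hnd rfl rfl hhead hlast hαs ?_ ?_ ?_,
    List.mem_append_right _ (List.mem_of_mem_head? hhead)⟩
  · rintro p (_ | ⟨_, ⟨⟩⟩) hp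
    refine hPQ q' ?_ hq'
    simpa using mem_dropLast_of_mem_arcList hp
  · intro v hv hvQ
    simp only [List.mem_append, List.mem_cons, List.not_mem_nil, or_false] at hv
    rcases hv with (rfl | rfl) | hv | rfl
    exacts [Or.inl rfl, absurd hvQ hα, absurd hvQ (hPQ v hv), Or.inr rfl]
  · intro v hv _
    simp only [List.mem_cons, List.not_mem_nil, or_false] at hv
    tauto

end AttachingTrail

theorem ncard_out_add_ncard_in_le {V : Type*} [Fintype V] {A : V → V → Prop}
    (hirr : ∀ v, ¬ A v v) {u v : V} (huv : u ≠ v) (hA : ¬ A u v)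
    (hpath : ∀ w, A u w → ¬ A w v) :
    {w | A u w}.ncard + {w | A w v}.ncard ≤ Fintype.card V - 2 := by
  have hdisj : Disjoint {w | A u w} {w | A w v} :=
    Set.disjoint_left.mpr fun w hu hv => hpath w hu hv
  have hsub : {w | A u w} ∪ {w | A w v} ⊆ {u, v}ᶜ := by
    rintro w (hw | hw) (rfl | rfl)
    exacts [hirr w hw, hA hw, hA hw, hirr w hw]
  calc {w | A u w}.ncard + {w | A w v}.ncard = ({w | A u w} ∪ {w | A w v}).ncard :=
        (Set.ncard_union_eq hdisj).symm
    _ ≤ ({u, v}ᶜ : Set V).ncard := Set.ncard_le_ncard hsub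
    _ = Fintype.card V - 2 := by
        rw [Set.ncard_compl, Set.ncard_pair huv, Nat.card_eq_fintype_card]

theorem stmt_18_general {V : Type*} [Fintype V] [DecidableEq V] (n : ℕ)
    (hn : Fintype.card V = n)
    (A : V → V → Prop) (hirr : ∀ v, ¬ A v v) (S : Set V) (Q : List V) (s : V)
    (hmeet : ∃ v ∈ S, v ∈ Q)
    (hs : s ∈ S) (hsQ : s ∉ Q)
    (hnoarc : ∀ w ∈ Q, ¬ A s w ∧ ¬ A w s)
    (hstrong : ∀ u ∈ S, ∀ v ∈ S, u ≠ v → DiReach A u v)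
    (hdeg : ∀ u ∈ S, ∀ v ∈ S, u ≠ v → ¬ A u v → ¬ A v u →
      2 * n - 3 ≤ ({w | A u w}.ncard + {w | A w u}.ncard) +
        ({w | A v w}.ncard + {w | A w v}.ncard)) :
    ∃ (x y : V) (T : List V), x ∈ Q ∧ y ∈ Q ∧ IsDitrail A T ∧
      T.head? = some x ∧ T.getLast? = some y ∧ s ∈ T ∧
      {v | v ∈ T ∧ v ∈ Q} = {x, y} ∧
      (∀ v ∈ T, v ≠ x → v ≠ y →
        (((arcList T).filter fun p => p.1 = v).length = 1 ∧
         ((arcList T).filter fun p => p.2 = v).length = 1) ∨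
        (((arcList T).filter fun p => p.1 = v).length = 2 ∧
         ((arcList T).filter fun p => p.2 = v).length = 2)) ∧
      (∀ v ∈ T, ∀ w ∈ T, v ≠ x → v ≠ y → w ≠ x → w ≠ y →
        ((arcList T).filter fun p => p.1 = v).length = 2 →
        ((arcList T).filter fun p => p.1 = w).length = 2 → v = w) := by
  obtain ⟨q, hqS, hqQ⟩ := hmeet
  have hsq : s ≠ q := fun h => hsQ (h ▸ hqQ)
  suffices ∃ x y T, IsAttachingTrail A Q x y T ∧ s ∈ T by
    obtain ⟨x, y, T, ⟨hx, hy, hT, hhead, hlast, hTQ, hdegT, htwice⟩, hsT⟩ := this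
    exact ⟨x, y, T, hx, hy, hT, hhead, hlast, hsT, hTQ, hdegT, htwice⟩
  by_cases hout : ∃ β, A s β ∧ ∃ q' ∈ Q, A β q'
  · obtain ⟨β, hsβ, q', hq', hβq'⟩ := hout
    exact exists_isAttachingTrail_of_arc_out hqQ (hstrong q hqS s hs hsq.symm) hsβ hβq'
      (fun hβ => (hnoarc β hβ).1 hsβ) hq'
  by_cases hin : ∃ α, A α s ∧ ∃ q' ∈ Q, A q' α
  · obtain ⟨α, hαs, q', hq', hq'α⟩ := hin
    exact exists_isAttachingTrail_of_arc_in hqQ (hstrong s hs q hqS hsq) hαs hq'α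
      (fun hα => (hnoarc α hα).2 hαs) hq'
  push Not at hout hin
  have hcard_qs := ncard_out_add_ncard_in_le hirr hsq.symm (hnoarc q hqQ).2
    fun w hqw hws => hin w hws q hqQ hqw
  have hcard_sq := ncard_out_add_ncard_in_le hirr hsq (hnoarc q hqQ).1
    fun w hsw hwq => hout w hsw q hqQ hwq
  have hn2 : 2 ≤ n := hn ▸ Fintype.one_lt_card_iff_nontrivial.mpr ⟨s, q, hsq⟩
  have hdeg_sq := hdeg s hs q hqS hsq (hnoarc q hqQ).1 (hnoarc q hqQ).2
  omega

/-- with `Q` a maximal closed ditrail meeting `S`, `s ∈ S` outside `Q`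
with no arcs to `Q`, `D` `S`-strong and the degree condition, there is an `(x,y)`-ditrail
through `s` meeting `Q` only in `x, y`, in which at most one internal vertex is visited
twice (in/out trail-degree 2) and all other internal vertices once. -/
theorem stmt_18 {V : Type*} [Fintype V] [DecidableEq V] (n : ℕ)
    (hn : Fintype.card V = n)
    (A : V → V → Prop) (hirr : ∀ v, ¬ A v v) (S : Set V) (Q : List V) (s : V)
    (hQ : IsClosedDitrail A Q) (hmeet : ∃ v ∈ S, v ∈ Q)
    (hs : s ∈ S) (hsQ : s ∉ Q)
    (hnoarc : ∀ w ∈ Q, ¬ A s w ∧ ¬ A w s)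
    (hmaxQ : ∀ Q' : List V, IsClosedDitrail A Q' →
      {v | v ∈ S ∧ v ∈ Q'}.ncard ≤ {v | v ∈ S ∧ v ∈ Q}.ncard)
    (hstrong : ∀ u ∈ S, ∀ v ∈ S, u ≠ v → DiReach A u v)
    (hdeg : ∀ u ∈ S, ∀ v ∈ S, u ≠ v → ¬ A u v → ¬ A v u →
      2 * n - 3 ≤ ({w | A u w}.ncard + {w | A w u}.ncard) +
        ({w | A v w}.ncard + {w | A w v}.ncard)) :
    ∃ (x y : V) (T : List V), x ∈ Q ∧ y ∈ Q ∧ IsDitrail A T ∧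
      T.head? = some x ∧ T.getLast? = some y ∧ s ∈ T ∧
      {v | v ∈ T ∧ v ∈ Q} = {x, y} ∧
      (∀ v ∈ T, v ≠ x → v ≠ y →
        (((arcList T).filter fun p => p.1 = v).length = 1 ∧
         ((arcList T).filter fun p => p.2 = v).length = 1) ∨
        (((arcList T).filter fun p => p.1 = v).length = 2 ∧
         ((arcList T).filter fun p => p.2 = v).length = 2)) ∧
      (∀ v ∈ T, ∀ w ∈ T, v ≠ x → v ≠ y → w ≠ x → w ≠ y →
        ((arcList T).filter fun p => p.1 = v).length = 2 →
        ((arcList T).filter fun p => p.1 = w).length = 2 → v = w) :=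
  stmt_18_general n hn A hirr S Q s hmeet hs hsQ hnoarc hstrong hdeg
end
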